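/- arXiv:0908.2833 — 2 statements merged into one kernel-verified Lean document; each statement's English description precedes it below -/
import Mathlib

section
/- If M ⊆ F is invariant and chain transitive for the discrete-time flow generated by g, then S¹ ×_g M is chain transitive for the skew-product flow φᵗ. -/
/-- An `(ε, S)`-chain from `x` to `y` for `σ`, with respect to the distance function `d`:
finitely many times in `S` and jump points, each jump smaller than `ε` at the endpoint. -/
def IsChainFrom {U T : Type*} (d : U → U → ℝ) (σ : T → U → U) (S : Set T)
    (ε : U → ℝ) (x y : U) : Prop :=
  ∃ k : ℕ, ∃ ts : Fin (k + 1) → T, ∃ xs : Fin (k + 2) → U,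
    xs 0 = x ∧ xs (Fin.last (k + 1)) = y ∧ (∀ i, ts i ∈ S) ∧
    ∀ i : Fin (k + 1),
      d (xs i.succ) (σ (ts i) (xs i.castSucc)) < ε (σ (ts i) (xs i.castSucc))

/-!
Periodicity of `X` and uniqueness for the linear ODE give `g (r + n) = g r * g 1 ^ n`, so on the
fibre over `r̄` the embedding `u ↦ (r̄, g r u)` conjugates `φ n` to `g 1 ^ n` and stretches
distances by at most `‖g r‖`. Hence a chain of `g 1` in `M` for the pulled-back `ε` divided by
`‖g r‖ + 1` becomes a chain of `φ` in that fibre. Its first jump, taken from `(r̄, g r x)` at a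
time `n`, can equally be taken from `(s̄, g s x)` at time `r - s + n`, which lands on the same
point; asking for `n > t + |s - r|` keeps all times above `t`.
-/

lemma UnitAddCircle.coe_add_natCast (x : ℝ) (n : ℕ) :
    ((x + n : ℝ) : UnitAddCircle) = x := by
  simpa using (show Function.Periodic (fun x : ℝ => (x : UnitAddCircle)) 1 from
    AddCircle.coe_add_period 1).nat_mul n x

section FundamentalSolution

variable {F : Type*} [NormedAddCommGroup F] [NormedSpace ℝ F]
  {X g : ℝ → F →L[ℝ] F} {T : ℝ}

theorem fundamental_solution_add_period (hX : Continuous X) (hXT : Function.Periodic X T)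
    (hg0 : g 0 = 1) (hg : ∀ t, HasDerivAt g (X t ∘L g t) t) (t : ℝ) :
    g (t + T) = g t * g T := by
  obtain rfl | hT := eq_or_ne T 0
  · simp [hg0]
  obtain ⟨C, hC⟩ := isBounded_iff_forall_norm_le.1 (hXT.isBounded_of_continuous hT hX)
  have hlip : ∀ τ, LipschitzWith C.toNNReal (fun A : F →L[ℝ] F => X τ ∘L A) := fun τ =>
    LipschitzWith.of_dist_le_mul fun A B => by
      rw [dist_eq_norm, dist_eq_norm, ← ContinuousLinearMap.comp_sub]
      exact (ContinuousLinearMap.opNorm_comp_le _ _).trans <| mul_le_mul_of_nonneg_right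
        ((hC _ ⟨τ, rfl⟩).trans (Real.le_coe_toNNReal C)) (norm_nonneg _)
  have hshift : ∀ τ, HasDerivAt (fun u => g (u + T)) (X τ ∘L g (τ + T)) τ := fun τ => by
    simpa only [hXT τ] using (hg (τ + T)).comp_add_const τ T
  have hmul : ∀ τ, HasDerivAt (fun u => g u * g T) (X τ ∘L (g τ * g T)) τ := fun τ =>
    (hg τ).mul_const (g T)
  have := ODE_solution_unique_univ (s := fun _ => Set.univ) (t₀ := 0)
    (fun τ => (hlip τ).lipschitzOnWith) (fun τ => ⟨hshift τ, trivial⟩)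
    (fun τ => ⟨hmul τ, trivial⟩) (by simp [hg0])
  exact congrFun this t

theorem fundamental_solution_add_nat_mul_period (hX : Continuous X)
    (hXT : Function.Periodic X T) (hg0 : g 0 = 1) (hg : ∀ t, HasDerivAt g (X t ∘L g t) t)
    (t : ℝ) (n : ℕ) : g (t + n * T) = g t * g T ^ n := by
  induction n with
  | zero => simp
  | succ n ih =>
    rw [Nat.cast_succ, add_one_mul, ← add_assoc,
      fundamental_solution_add_period hX hXT hg0 hg, ih, pow_succ, mul_assoc]

end FundamentalSolution

namespace IsChainFrom

variable {U V T T' : Type*} {d : U → U → ℝ} {σ : T → U → U} {S : Set T} {ε : U → ℝ}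
  {x y : U}

theorem map {d' : V → V → ℝ} {σ' : T' → V → V} {S' : Set T'} {ε' : V → ℝ}
    (π : U → V) (c : T → T') (hc : Set.MapsTo c S S') (hσ : ∀ τ u, σ' (c τ) (π u) = π (σ τ u))
    (hε : ∀ u v, d u v < ε v → d' (π u) (π v) < ε' (π v)) (h : IsChainFrom d σ S ε x y) :
    IsChainFrom d' σ' S' ε' (π x) (π y) := by
  obtain ⟨k, ts, xs, h0, hlast, hts, hstep⟩ := h
  refine ⟨k, c ∘ ts, π ∘ xs, by simp [h0], by simp [hlast], fun i => hc (hts i), fun i => ?_⟩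
  simpa only [Function.comp_apply, hσ] using hε _ _ (hstep i)

theorem change_start {S' : Set T} {p : U} (f : T → T) (hS : S ⊆ S')
    (hf : ∀ τ ∈ S, f τ ∈ S' ∧ σ (f τ) p = σ τ x) (h : IsChainFrom d σ S ε x y) :
    IsChainFrom d σ S' ε p y := by
  obtain ⟨k, ts, xs, h0, hlast, hts, hstep⟩ := h
  refine ⟨k, Function.update ts 0 (f (ts 0)), Function.update xs 0 p, by simp,
    by simpa [Fin.last_pos.ne'] using hlast, fun i => ?_, fun i => ?_⟩
  · rcases eq_or_ne i 0 with rfl | hi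
    · simpa using (hf _ (hts 0)).1
    · simpa [hi] using hS (hts i)
  · rcases eq_or_ne i 0 with rfl | hi
    · simpa [(hf _ (hts 0)).2, ← h0] using hstep 0
    · simpa [hi, Fin.succ_ne_zero] using hstep i

end IsChainFrom

theorem ContinuousLinearMap.norm_map_sub_map_lt {E F : Type*} [SeminormedAddCommGroup E]
    [SeminormedAddCommGroup F] [NormedSpace ℝ E] [NormedSpace ℝ F] (A : E →L[ℝ] F) {u v : E}
    {c : ℝ} (h : ‖u - v‖ < c / (‖A‖ + 1)) : ‖A u - A v‖ < c :=
  calc ‖A u - A v‖ = ‖A (u - v)‖ := by rw [map_sub]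
    _ ≤ ‖A‖ * ‖u - v‖ := A.le_opNorm _
    _ ≤ (‖A‖ + 1) * ‖u - v‖ := by gcongr; linarith
    _ < c := (lt_div_iff₀' (by positivity)).1 h

theorem skew_product_chain_transitive_general
    {F : Type*} [NormedAddCommGroup F] [NormedSpace ℝ F]
    (X g ginv : ℝ → F →L[ℝ] F)
    (hX : Continuous X) (hXper : ∀ t, X (t + 1) = X t)
    (hg0 : g 0 = 1) (hg : ∀ t, HasDerivAt g (X t ∘L g t) t)
    (hinv : ∀ s, g s ∘L ginv s = 1 ∧ ginv s ∘L g s = 1)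
    (φ : ℝ → UnitAddCircle × F → UnitAddCircle × F)
    (hφ : ∀ (t s : ℝ) (x : F),
      φ t ((s : UnitAddCircle), x) = (((s + t : ℝ) : UnitAddCircle), g (t + s) (ginv s x)))
    (M : Set F)
    (hMct : ∀ x ∈ M, ∀ y ∈ M, ∀ ε : F → ℝ, Continuous ε → (∀ u, 0 < ε u) →
      ∀ t : ℝ, 0 < t →
        IsChainFrom (fun x y => ‖x - y‖) (fun (n : ℕ) (x : F) => (g 1 ^ n) x)
          {n : ℕ | t < (n : ℝ)} ε x y) :
    ∀ p ∈ ⋃ s : ℝ, (fun y => ((s : UnitAddCircle), y)) '' (g s '' M),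
      ∀ q ∈ ⋃ s : ℝ, (fun y => ((s : UnitAddCircle), y)) '' (g s '' M),
        ∀ ε : UnitAddCircle × F → ℝ, Continuous ε → (∀ u, 0 < ε u) →
          ∀ t : ℝ, 0 < t →
            IsChainFrom (fun p q => dist p.1 q.1 + ‖p.2 - q.2‖) φ
              {r : ℝ | t < r} ε p q := by
  intro p hp q hq ε hε hεpos t ht
  simp only [Set.mem_iUnion, Set.mem_image] at hp hq
  obtain ⟨s, _, ⟨x, hx, rfl⟩, rfl⟩ := hp
  obtain ⟨r, _, ⟨y, hy, rfl⟩, rfl⟩ := hq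
  have hflow (s τ : ℝ) (x : F) :
      φ τ ((s : UnitAddCircle), g s x) = (((s + τ : ℝ) : UnitAddCircle), g (s + τ) x) := by
    have hginv : ginv s (g s x) = x := by simpa using ContinuousLinearMap.ext_iff.1 (hinv s).2 x
    rw [hφ, add_comm τ, hginv]
  have hfibre (n : ℕ) (u : F) :
      φ n ((r : UnitAddCircle), g r u) = ((r : UnitAddCircle), g r ((g 1 ^ n) u)) := by
    have hshift := fundamental_solution_add_nat_mul_period hX hXper hg0 hg r n
    rw [mul_one] at hshift
    rw [hflow, UnitAddCircle.coe_add_natCast, hshift]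
    rfl
  have hchain := hMct x hx y hy (fun u => ε ((r : UnitAddCircle), g r u) / (‖g r‖ + 1))
    (by fun_prop) (fun u => div_pos (hεpos _) (by positivity)) (t + |s - r|) (by positivity)
  have hfibre_chain : IsChainFrom (fun p q => dist p.1 q.1 + ‖p.2 - q.2‖) φ
      {τ : ℝ | t + |s - r| < τ} ε ((r : UnitAddCircle), g r x) ((r : UnitAddCircle), g r y) :=
    hchain.map (fun u => ((r : UnitAddCircle), g r u)) (fun n : ℕ => (n : ℝ)) (fun n hn => hn)
      hfibre fun u v h => by simpa using (g r).norm_map_sub_map_lt h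
  refine hfibre_chain.change_start (r - s + ·) (fun τ hτ => ?_) fun τ hτ => ⟨?_, ?_⟩
  · exact show t < τ by linarith [abs_nonneg (s - r), show t + |s - r| < τ from hτ]
  · exact show t < r - s + τ by linarith [le_abs_self (s - r), show t + |s - r| < τ from hτ]
  · rw [hflow, hflow, show s + (r - s + τ) = r + τ by ring]

/-- If `M ⊆ F` is invariant and chain transitive for the discrete-time flow generated by
`g = g 1`, then `S¹ ×_g M` is chain transitive for the skew-product flow `φᵗ`, where
chains are taken with respect to the metric
`d̄((s̄,x),(r̄,y)) = min{|s−r|,1−|s−r|} + ‖x−y‖` and positive continuous `ε`. -/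
theorem skew_product_chain_transitive
    {F : Type*} [NormedAddCommGroup F] [NormedSpace ℝ F] [CompleteSpace F]
    (X g ginv : ℝ → F →L[ℝ] F)
    (hX : Continuous X) (hXper : ∀ t, X (t + 1) = X t)
    (hg0 : g 0 = 1) (hg : ∀ t, HasDerivAt g (X t ∘L g t) t)
    (hinv : ∀ s, g s ∘L ginv s = 1 ∧ ginv s ∘L g s = 1)
    (φ : ℝ → UnitAddCircle × F → UnitAddCircle × F)
    (hφ : ∀ (t s : ℝ) (x : F),
      φ t ((s : UnitAddCircle), x) = (((s + t : ℝ) : UnitAddCircle), g (t + s) (ginv s x)))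
    (M : Set F) (hMinv : g 1 '' M = M)
    (hMct : ∀ x ∈ M, ∀ y ∈ M, ∀ ε : F → ℝ, Continuous ε → (∀ u, 0 < ε u) →
      ∀ t : ℝ, 0 < t →
        IsChainFrom (fun x y => ‖x - y‖) (fun (n : ℕ) (x : F) => (g 1 ^ n) x)
          {n : ℕ | t < (n : ℝ)} ε x y) :
    ∀ p ∈ ⋃ s : ℝ, (fun y => ((s : UnitAddCircle), y)) '' (g s '' M),
      ∀ q ∈ ⋃ s : ℝ, (fun y => ((s : UnitAddCircle), y)) '' (g s '' M),
        ∀ ε : UnitAddCircle × F → ℝ, Continuous ε → (∀ u, 0 < ε u) →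
          ∀ t : ℝ, 0 < t →
            IsChainFrom (fun p q => dist p.1 q.1 + ‖p.2 - q.2‖) φ
              {r : ℝ | t < r} ε p q :=
  skew_product_chain_transitive_general X g ginv hX hXper hg0 hg hinv φ hφ M hMct
end

section
/- If M is a chain transitive component of the discrete-time flow generated by g, then the stable set of S¹ ×_g M under the skew-product flow φᵗ equals S¹ ×_g st(M), where st(M) is the stable set of M under g. -/
open Filter

/-- Chain equivalence via `(ε,t)`-chains with positive continuous `ε`. -/
def ChainEquiv {U T : Type*} [TopologicalSpace U] (d : U → U → ℝ) (σ : T → U → U)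
    (Times : ℝ → Set T) (x y : U) : Prop :=
  ∀ ε : U → ℝ, Continuous ε → (∀ u, 0 < ε u) → ∀ t : ℝ, 0 < t →
    IsChainFrom d σ (Times t) ε x y ∧ IsChainFrom d σ (Times t) ε y x

/-- The chain transitive components. -/
def ChainComponents {U T : Type*} [TopologicalSpace U] (d : U → U → ℝ) (σ : T → U → U)
    (Times : ℝ → Set T) : Set (Set U) :=
  {C | ∃ x, ChainEquiv d σ Times x x ∧
    C = {y | ChainEquiv d σ Times y y ∧ ChainEquiv d σ Times x y}}

open Set Topology

/-!
Floquet theory gives `g (t + n) = g t * g 1 ^ n`, so the time-`n` map of the skew-product flow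
sends `(s̄, g s x)` to `(s̄, g s ((g 1)ⁿ x))`. Hence `(s̄, g s y)` is an ω-limit point of
`(s̄, g s x)` whenever `y ∈ ω(x)`; conversely, writing diverging times as `n + δ` with `n` an
integer and `δ` convergent shows that every ω-limit point of `(s̄, g s x)` is `(σ̄, g σ y)` for
some `y ∈ ω(x)`. If `(s̄, g s y) = (σ̄, g σ w)` then `w` and `y` differ by a power of `g 1`;
since chain classes are invariant under `g 1` and ω-limit points are chain recurrent, `y` then
lies in `M` whenever `w` does.
-/

section Chains

variable {U T : Type*}

def ChainStep (d : U → U → ℝ) (σ : T → U → U) (S : Set T) (ε : U → ℝ) (x y : U) : Prop :=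
  ∃ t ∈ S, d y (σ t x) < ε (σ t x)

theorem ChainStep.mono {d : U → U → ℝ} {σ : T → U → U} {S S' : Set T} {ε ε' : U → ℝ}
    (hS : S ⊆ S') (hε : ∀ u, ε u ≤ ε' u) {x y : U} (h : ChainStep d σ S ε x y) :
    ChainStep d σ S' ε' x y :=
  let ⟨t, ht, hd⟩ := h
  ⟨t, hS ht, hd.trans_le (hε _)⟩

theorem Relation.transGen_iff_exists_fin {r : U → U → Prop} {a b : U} :
    Relation.TransGen r a b ↔ ∃ k : ℕ, ∃ xs : Fin (k + 2) → U, xs 0 = a ∧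
      xs (Fin.last (k + 1)) = b ∧ ∀ i : Fin (k + 1), r (xs i.castSucc) (xs i.succ) := by
  constructor
  · intro h
    induction h with
    | single hab => exact ⟨0, ![a, _], rfl, rfl, fun i => by fin_cases i; exact hab⟩
    | @tail b c _ hbc ih =>
      obtain ⟨k, xs, h0, hl, hr⟩ := ih
      refine ⟨k + 1, Fin.snoc xs c, by simpa using h0, by simp, fun i => ?_⟩
      induction i using Fin.lastCases with
      | last => simpa [hl] using hbc
      | cast j => simpa only [Fin.succ_castSucc, Fin.snoc_castSucc] using hr j
  · rintro ⟨k, xs, rfl, rfl, hr⟩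
    induction k with
    | zero => exact .single (hr 0)
    | succ k ih =>
      exact .tail (ih (Fin.init xs) fun i => by simpa [Fin.init] using hr i.castSucc)
        (hr (Fin.last _))

theorem isChainFrom_iff_transGen {d : U → U → ℝ} {σ : T → U → U} {S : Set T} {ε : U → ℝ}
    {x y : U} : IsChainFrom d σ S ε x y ↔ Relation.TransGen (ChainStep d σ S ε) x y := by
  rw [Relation.transGen_iff_exists_fin]
  constructor
  · rintro ⟨k, ts, xs, h0, hl, hS, hd⟩
    exact ⟨k, xs, h0, hl, fun i => ⟨ts i, hS i, hd i⟩⟩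
  · rintro ⟨k, xs, h0, hl, hstep⟩
    choose ts hS hd using hstep
    exact ⟨k, ts, xs, h0, hl, hS, hd⟩

variable [TopologicalSpace U] {d : U → U → ℝ} {σ : T → U → U} {Times : ℝ → Set T}

theorem chainEquiv_iff_transGen {x y : U} :
    ChainEquiv d σ Times x y ↔ ∀ ε : U → ℝ, Continuous ε → (∀ u, 0 < ε u) → ∀ t : ℝ, 0 < t →
      Relation.TransGen (ChainStep d σ (Times t) ε) x y ∧
        Relation.TransGen (ChainStep d σ (Times t) ε) y x := by
  simp only [ChainEquiv, isChainFrom_iff_transGen]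

theorem ChainEquiv.symm {x y : U} (h : ChainEquiv d σ Times x y) : ChainEquiv d σ Times y x :=
  fun ε hε hpos t ht => (h ε hε hpos t ht).symm

theorem ChainEquiv.trans {x y z : U} (hxy : ChainEquiv d σ Times x y)
    (hyz : ChainEquiv d σ Times y z) : ChainEquiv d σ Times x z := by
  rw [chainEquiv_iff_transGen] at *
  intro ε hε hpos t ht
  obtain ⟨hxy, hyx⟩ := hxy ε hε hpos t ht
  obtain ⟨hyz, hzy⟩ := hyz ε hε hpos t ht
  exact ⟨hxy.trans hyz, hzy.trans hyx⟩

theorem chainEquiv_self_of_mem_chainComponents {C : Set U}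
    (hC : C ∈ ChainComponents d σ Times) {x : U} (hx : x ∈ C) : ChainEquiv d σ Times x x := by
  obtain ⟨x₀, -, rfl⟩ := hC
  exact hx.1

theorem mem_of_chainEquiv_of_mem_chainComponents {C : Set U}
    (hC : C ∈ ChainComponents d σ Times) {x y : U} (hx : x ∈ C)
    (hxy : ChainEquiv d σ Times x y) : y ∈ C := by
  obtain ⟨x₀, -, rfl⟩ := hC
  exact ⟨hxy.symm.trans hxy, hx.2.trans hxy⟩

end Chains

section PowApply

variable {R M : Type*} [Semiring R] [AddCommMonoid M] [Module R M] [TopologicalSpace M]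

theorem ContinuousLinearMap.pow_succ_apply (A : M →L[R] M) (n : ℕ) (x : M) :
    (A ^ (n + 1)) x = (A ^ n) (A x) := by
  rw [pow_succ]
  rfl

theorem ContinuousLinearMap.pow_succ'_apply (A : M →L[R] M) (n : ℕ) (x : M) :
    (A ^ (n + 1)) x = A ((A ^ n) x) := by
  rw [pow_succ']
  rfl

theorem ContinuousLinearMap.pow_add_apply (A : M →L[R] M) (m n : ℕ) (x : M) :
    (A ^ (m + n)) x = (A ^ m) ((A ^ n) x) := by
  rw [pow_add]
  rfl

end PowApply

section DiscreteLinearFlow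

variable {F : Type*} [NormedAddCommGroup F] [NormedSpace ℝ F]

variable (A : F →L[ℝ] F)

abbrev DiscreteChainStep (t : ℝ) (ε : F → ℝ) : F → F → Prop :=
  ChainStep (fun x y => ‖x - y‖) (fun (n : ℕ) (x : F) => (A ^ n) x) {n : ℕ | t < (n : ℝ)} ε

abbrev DiscreteChainEquiv : F → F → Prop :=
  ChainEquiv (fun x y => ‖x - y‖) (fun (n : ℕ) (x : F) => (A ^ n) x)
    (fun t => {n : ℕ | t < (n : ℝ)})

def discreteOmegaLimit (x : F) : Set F :=
  {y | ∃ n : ℕ → ℕ, Tendsto n atTop atTop ∧ Tendsto (fun k => (A ^ n k) x) atTop (𝓝 y)}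

variable {A}

theorem discreteChainStep_iff {t : ℝ} {ε : F → ℝ} {x y : F} :
    DiscreteChainStep A t ε x y ↔ ∃ n : ℕ, t < n ∧ ‖y - (A ^ n) x‖ < ε ((A ^ n) x) :=
  Iff.rfl

theorem discreteChainEquiv_iff {x y : F} :
    DiscreteChainEquiv A x y ↔ ∀ ε : F → ℝ, Continuous ε → (∀ u, 0 < ε u) → ∀ t : ℝ, 0 < t →
      Relation.TransGen (DiscreteChainStep A t ε) x y ∧
        Relation.TransGen (DiscreteChainStep A t ε) y x :=
  chainEquiv_iff_transGen

theorem DiscreteChainStep.mono {t t' : ℝ} {ε ε' : F → ℝ} (ht : t' ≤ t)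
    (hε : ∀ u, ε u ≤ ε' u) {x y : F} (h : DiscreteChainStep A t ε x y) :
    DiscreteChainStep A t' ε' x y :=
  ChainStep.mono (fun _ hn => ht.trans_lt hn) hε h

theorem DiscreteChainStep.apply_right {t : ℝ} {ε : F → ℝ} {x y : F}
    (h : DiscreteChainStep A t (fun u => ε (A u) / (‖A‖ + 1)) x y) :
    DiscreteChainStep A t ε x (A y) := by
  obtain ⟨n, hn, hd⟩ := discreteChainStep_iff.1 h
  refine discreteChainStep_iff.2 ⟨n + 1, by push_cast; linarith, ?_⟩
  rw [A.pow_succ'_apply, ← map_sub]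
  calc ‖A (y - (A ^ n) x)‖ ≤ ‖A‖ * ‖y - (A ^ n) x‖ := A.le_opNorm _
    _ ≤ (‖A‖ + 1) * ‖y - (A ^ n) x‖ := by gcongr; linarith
    _ < (‖A‖ + 1) * (ε (A ((A ^ n) x)) / (‖A‖ + 1)) := by gcongr
    _ = ε (A ((A ^ n) x)) := by field_simp

theorem DiscreteChainStep.apply_left {t : ℝ} (ht : 0 ≤ t) {ε : F → ℝ} {x y : F}
    (h : DiscreteChainStep A (t + 1) ε x y) : DiscreteChainStep A t ε (A x) y := by
  obtain ⟨n, hn, hd⟩ := discreteChainStep_iff.1 h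
  obtain ⟨m, rfl⟩ : ∃ m, n = m + 1 :=
    Nat.exists_eq_succ_of_ne_zero (by rintro rfl; norm_num at hn; linarith)
  push_cast at hn
  refine discreteChainStep_iff.2 ⟨m, by linarith, ?_⟩
  rwa [← A.pow_succ_apply]

theorem DiscreteChainEquiv.apply_self {x : F} (h : DiscreteChainEquiv A x x) :
    DiscreteChainEquiv A x (A x) := by
  rw [discreteChainEquiv_iff] at *
  intro ε hε hpos t ht
  -- `x → A x`: end a loop at `x` one step later; `A x → x`: start it one step later
  constructor
  · obtain ⟨hxx, -⟩ := h (fun u => min (ε u) (ε (A u) / (‖A‖ + 1)))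
      (hε.min ((hε.comp A.continuous).div_const _))
      (fun u => lt_min (hpos u) (div_pos (hpos _) (by positivity))) t ht
    obtain ⟨b, hxb, hbx⟩ := Relation.TransGen.tail'_iff.1 hxx
    have hxb' := Relation.ReflTransGen.mono
      (fun _ _ => DiscreteChainStep.mono le_rfl fun _ => min_le_left _ _) _ _ hxb
    exact .tail' hxb' (DiscreteChainStep.apply_right (hbx.mono le_rfl fun _ => min_le_right _ _))
  · obtain ⟨hxx, -⟩ := h ε hε hpos (t + 1) (by linarith)
    obtain ⟨c, hxc, hcx⟩ := Relation.TransGen.head'_iff.1 hxx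
    have hcx' := Relation.ReflTransGen.mono
      (fun _ _ => DiscreteChainStep.mono (by linarith) fun _ => le_rfl) _ _ hcx
    exact .head' (hxc.apply_left ht.le) hcx'

theorem DiscreteChainEquiv.pow_apply_self {x : F} (h : DiscreteChainEquiv A x x) (n : ℕ) :
    DiscreteChainEquiv A x ((A ^ n) x) := by
  induction n with
  | zero => simpa using h
  | succ n ih =>
    have hstep := DiscreteChainEquiv.apply_self (ih.symm.trans ih)
    rw [← A.pow_succ'_apply] at hstep
    exact ih.trans hstep

theorem transGen_discreteChainStep_of_mem_discreteOmegaLimit {x y z : F}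
    (hy : y ∈ discreteOmegaLimit A x) (hz : z ∈ discreteOmegaLimit A x) {ε : F → ℝ}
    (hε : Continuous ε) (hpos : ∀ u, 0 < ε u) (t : ℝ) :
    Relation.TransGen (DiscreteChainStep A t ε) y z := by
  -- jump from `y` onto the orbit of `x`, follow it, and jump off to `z` at a late time
  obtain ⟨ny, -, hy⟩ := hy
  obtain ⟨nz, hnz, hz⟩ := hz
  obtain ⟨N, hN⟩ := exists_nat_gt t
  have hnear_y : ∀ᶠ j in atTop, ‖(A ^ N) ((A ^ ny j) x) - (A ^ N) y‖ < ε ((A ^ N) y) := by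
    simpa only [dist_eq_norm, Function.comp_apply] using
      Metric.tendsto_nhds.1 (((A ^ N).continuous.tendsto y).comp hy) _ (hpos _)
  have hnear_z : ∀ᶠ k in atTop, ‖z - (A ^ nz k) x‖ < ε ((A ^ nz k) x) := by
    have hlim : Tendsto (fun k => ε ((A ^ nz k) x) - ‖z - (A ^ nz k) x‖) atTop
        (𝓝 (ε z - ‖z - z‖)) :=
      ((hε.tendsto z).comp hz).sub (tendsto_const_nhds.sub hz).norm
    filter_upwards [hlim.eventually_const_lt (by simpa using hpos z)] with k hk
    linarith
  obtain ⟨j, hj⟩ := hnear_y.exists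
  obtain ⟨k, hk, hlate⟩ :=
    (hnear_z.and (hnz.eventually_ge_atTop (N + ny j + ⌊t⌋₊ + 1))).exists
  refine .head (discreteChainStep_iff.2 ⟨N, hN, hj⟩) (.single (discreteChainStep_iff.2
    ⟨nz k - (N + ny j), ?_, ?_⟩))
  · calc t < ⌊t⌋₊ + 1 := Nat.lt_floor_add_one t
      _ ≤ ((nz k - (N + ny j) : ℕ) : ℝ) := by exact_mod_cast (by omega)
  · rwa [← A.pow_add_apply, ← A.pow_add_apply, add_assoc, Nat.sub_add_cancel (by omega)]

theorem discreteChainEquiv_of_mem_discreteOmegaLimit {x y z : F}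
    (hy : y ∈ discreteOmegaLimit A x) (hz : z ∈ discreteOmegaLimit A x) :
    DiscreteChainEquiv A y z :=
  discreteChainEquiv_iff.2 fun _ hε hpos t _ =>
    ⟨transGen_discreteChainStep_of_mem_discreteOmegaLimit hy hz hε hpos t,
      transGen_discreteChainStep_of_mem_discreteOmegaLimit hz hy hε hpos t⟩

end DiscreteLinearFlow

section FundamentalSolution

variable {F : Type*} [NormedAddCommGroup F]

theorem Function.Periodic.exists_norm_le {X : ℝ → F} (hX : Continuous X)
    (hper : Function.Periodic X 1) : ∃ C, ∀ s, ‖X s‖ ≤ C := by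
  obtain ⟨C, hC⟩ := (isCompact_Icc (a := (0 : ℝ)) (b := 1)).exists_bound_of_continuousOn
    hX.continuousOn
  refine ⟨C, fun s => ?_⟩
  rw [← hper.sub_int_mul_eq (n := ⌊s⌋), mul_one, ← Int.fract]
  exact hC _ ⟨Int.fract_nonneg s, (Int.fract_lt_one s).le⟩

variable [NormedSpace ℝ F]

theorem fundamental_solution_add_one {X g : ℝ → F →L[ℝ] F} (hX : Continuous X)
    (hper : Function.Periodic X 1) (hg0 : g 0 = 1) (hg : ∀ t, HasDerivAt g (X t ∘L g t) t)
    (t : ℝ) : g (t + 1) = g t * g 1 := by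
  obtain ⟨C, hC⟩ := hper.exists_norm_le hX
  have hlip : ∀ s, LipschitzOnWith ⟨max C 0, le_max_right _ _⟩ (fun B => X s * B) univ := by
    refine fun s => LipschitzOnWith.of_dist_le_mul fun B _ B' _ => ?_
    rw [dist_eq_norm, dist_eq_norm, ← mul_sub]
    exact (norm_mul_le _ _).trans (by gcongr; exact (hC s).trans (le_max_left _ _))
  have hshift : ∀ s, HasDerivAt (fun s => g (s + 1)) (X s * g (s + 1)) s := fun s => by
    have h := (hg (s + 1)).scomp s ((hasDerivAt_id s).add_const 1)
    rw [hper s, one_smul] at h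
    exact h
  have hmul : ∀ s, HasDerivAt (fun s => g s * g 1) (X s * (g s * g 1)) s := fun s => by
    rw [← mul_assoc]
    exact (hg s).mul_const (g 1)
  -- both sides solve `B' = X B` with `B 0 = g 1`
  refine ODE_solution_unique_of_mem_Ioo (v := fun s B => X s * B) (s := fun _ => univ)
    (fun s _ => hlip s) (t₀ := 0) (a := -(|t| + 1)) (b := |t| + 1) ⟨by linarith [abs_nonneg t],
    by linarith [abs_nonneg t]⟩ (fun s _ => ⟨hshift s, trivial⟩)
    (fun s _ => ⟨hmul s, trivial⟩) (by simp [hg0])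
    ⟨by linarith [neg_abs_le t], by linarith [le_abs_self t]⟩

end FundamentalSolution

theorem apply_add_nat_eq_mul_pow {M : Type*} [Monoid M] {f : ℝ → M}
    (h : ∀ t, f (t + 1) = f t * f 1) (t : ℝ) (n : ℕ) : f (t + n) = f t * f 1 ^ n := by
  induction n with
  | zero => simp
  | succ n ih => rw [Nat.cast_succ, ← add_assoc, h, ih, pow_succ, mul_assoc]

theorem Continuous.inverse_of_mul_eq_one {X R : Type*} [TopologicalSpace X] [NormedRing R]
    [HasSummableGeomSeries R] {f f' : X → R} (hf : Continuous f)
    (hinv : ∀ x, f x * f' x = 1 ∧ f' x * f x = 1) : Continuous f' := by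
  have hunit : ∀ x, Ring.inverse (f x) = f' x := fun x =>
    Ring.inverse_unit ⟨f x, f' x, (hinv x).1, (hinv x).2⟩
  refine continuous_iff_continuousAt.2 fun x => ?_
  have hx : ContinuousAt Ring.inverse (f x) :=
    NormedRing.inverse_continuousAt ⟨f x, f' x, (hinv x).1, (hinv x).2⟩
  simpa only [Function.comp_def, hunit] using hx.comp hf.continuousAt


namespace UnitAddCircle

theorem coe_add_nat (s : ℝ) (n : ℕ) : ((s + n : ℝ) : UnitAddCircle) = s := by
  rw [AddCircle.coe_add, add_eq_left]
  exact (AddCircle.coe_eq_zero_iff 1).2 ⟨n, by simp⟩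

theorem exists_int_eq_add_of_coe_eq {s σ : ℝ} (h : (σ : UnitAddCircle) = s) :
    ∃ m : ℤ, s = σ + m := by
  obtain ⟨m, hm⟩ := (AddCircle.coe_eq_zero_iff 1).1
    (show ((s - σ : ℝ) : UnitAddCircle) = 0 by rw [AddCircle.coe_sub, h, sub_self])
  exact ⟨m, by simp only [zsmul_eq_mul, mul_one] at hm; linarith⟩

theorem exists_nat_tendsto_sub_of_tendsto_coe {v : ℕ → ℝ} {σ : ℝ} (hv : Tendsto v atTop atTop)
    (hσ : Tendsto (fun k => (v k : UnitAddCircle)) atTop (𝓝 (σ : UnitAddCircle))) :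
    ∃ n : ℕ → ℕ, Tendsto n atTop atTop ∧ Tendsto (fun k => v k - n k) atTop (𝓝 σ) := by
  set m : ℕ → ℤ := fun k => round (v k - σ)
  have hfrac : Tendsto (fun k => v k - σ - m k) atTop (𝓝 0) := by
    rw [tendsto_zero_iff_norm_tendsto_zero]
    simpa only [← AddCircle.coe_sub, UnitAddCircle.norm_eq, Real.norm_eq_abs] using
      tendsto_iff_norm_sub_tendsto_zero.1 hσ
  have hm : Tendsto (fun k => (m k : ℝ)) atTop atTop :=
    tendsto_atTop_mono (fun k => by linarith [(abs_le.1 (abs_sub_round (v k - σ))).2])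
      (tendsto_atTop_add_const_right _ (-σ - 1 / 2) hv)
  have hcast : ∀ᶠ k in atTop, (((m k).toNat : ℕ) : ℝ) = m k :=
    (hm.eventually_ge_atTop 0).mono fun k hk => by
      exact_mod_cast Int.toNat_of_nonneg (by exact_mod_cast hk)
  refine ⟨fun k => (m k).toNat, tendsto_natCast_atTop_iff.1 (hm.congr' (hcast.mono
    fun _ hk => hk.symm)), ?_⟩
  have hlim := hfrac.const_add σ
  rw [add_zero] at hlim
  refine hlim.congr' (hcast.mono fun k hk => ?_)
  dsimp only
  rw [hk]
  ring

end UnitAddCircle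

section SkewProduct

variable {F : Type*} [NormedAddCommGroup F] [NormedSpace ℝ F]

def flowOmegaLimit {P : Type*} [TopologicalSpace P] (φ : ℝ → P → P) (p : P) : Set P :=
  {q | ∃ u : ℕ → ℝ, Tendsto u atTop atTop ∧ Tendsto (fun k => φ (u k) p) atTop (𝓝 q)}

def twistedProduct (g : ℝ → F →L[ℝ] F) (E : Set F) : Set (UnitAddCircle × F) :=
  ⋃ s : ℝ, (fun y => ((s : UnitAddCircle), y)) '' (g s '' E)

variable {g ginv : ℝ → F →L[ℝ] F} {φ : ℝ → UnitAddCircle × F → UnitAddCircle × F}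

theorem mem_twistedProduct {E : Set F} {p : UnitAddCircle × F} :
    p ∈ twistedProduct g E ↔ ∃ s : ℝ, ∃ x ∈ E, ((s : UnitAddCircle), g s x) = p := by
  simp [twistedProduct]

theorem exists_pow_apply_eq_of_mk_eq (hadd : ∀ (t : ℝ) (n : ℕ), g (t + n) = g t * g 1 ^ n)
    (hinj : ∀ s, Function.Injective (g s)) {s σ : ℝ} {w y : F}
    (h : ((σ : UnitAddCircle), g σ w) = ((s : UnitAddCircle), g s y)) :
    ∃ n : ℕ, w = (g 1 ^ n) y ∨ y = (g 1 ^ n) w := by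
  obtain ⟨hσs, hwy⟩ := Prod.mk_inj.1 h
  obtain ⟨m, hm⟩ := UnitAddCircle.exists_int_eq_add_of_coe_eq hσs
  obtain ⟨n, rfl | rfl⟩ := Int.eq_nat_or_neg m
  · refine ⟨n, .inl (hinj σ ?_)⟩
    rw [hwy, hm, Int.cast_natCast, hadd]
    rfl
  · have hσ : σ = s + n := by push_cast at hm; linarith
    refine ⟨n, .inr (hinj s ?_)⟩
    rw [← hwy, hσ, hadd]
    rfl

theorem mk_mem_flowOmegaLimit
    (hφ : ∀ (t s : ℝ) (x : F),
      φ t ((s : UnitAddCircle), x) = (((s + t : ℝ) : UnitAddCircle), g (t + s) (ginv s x)))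
    (hadd : ∀ (t : ℝ) (n : ℕ), g (t + n) = g t * g 1 ^ n) (hgl : ∀ s x, ginv s (g s x) = x)
    {s : ℝ} {x y : F} (hy : y ∈ discreteOmegaLimit (g 1) x) :
    ((s : UnitAddCircle), g s y) ∈ flowOmegaLimit φ ((s : UnitAddCircle), g s x) := by
  obtain ⟨n, hn, hconv⟩ := hy
  refine ⟨fun k => n k, tendsto_natCast_atTop_atTop.comp hn, ?_⟩
  have hflow : ∀ k, φ (n k) ((s : UnitAddCircle), g s x) =
      ((s : UnitAddCircle), g s ((g 1 ^ n k) x)) := fun k => by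
    rw [hφ, hgl, add_comm (n k : ℝ), hadd, UnitAddCircle.coe_add_nat]
    rfl
  simpa only [hflow, Function.comp_def] using
    tendsto_const_nhds.prodMk_nhds (((g s).continuous.tendsto y).comp hconv)

theorem discreteOmegaLimit_subset_of_flowOmegaLimit_subset
    (hφ : ∀ (t s : ℝ) (x : F),
      φ t ((s : UnitAddCircle), x) = (((s + t : ℝ) : UnitAddCircle), g (t + s) (ginv s x)))
    (hadd : ∀ (t : ℝ) (n : ℕ), g (t + n) = g t * g 1 ^ n) (hgl : ∀ s x, ginv s (g s x) = x)
    {M : Set F}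
    (hM : M ∈ ChainComponents (fun x y => ‖x - y‖) (fun (n : ℕ) (x : F) => (g 1 ^ n) x)
      (fun t => {n : ℕ | t < (n : ℝ)}))
    {s : ℝ} {x : F} (h : flowOmegaLimit φ ((s : UnitAddCircle), g s x) ⊆ twistedProduct g M) :
    discreteOmegaLimit (g 1) x ⊆ M := by
  intro y hy
  obtain ⟨σ, w, hw, hσw⟩ := mem_twistedProduct.1 (h (mk_mem_flowOmegaLimit hφ hadd hgl hy))
  obtain ⟨n, rfl | rfl⟩ :=
    exists_pow_apply_eq_of_mk_eq hadd (fun s => Function.LeftInverse.injective (hgl s)) hσw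
  · have hyy := discreteChainEquiv_of_mem_discreteOmegaLimit hy hy
    exact mem_of_chainEquiv_of_mem_chainComponents hM hw (hyy.pow_apply_self n).symm
  · have hww : DiscreteChainEquiv (g 1) w w := chainEquiv_self_of_mem_chainComponents hM hw
    exact mem_of_chainEquiv_of_mem_chainComponents hM hw (hww.pow_apply_self n)

theorem flowOmegaLimit_subset_twistedProduct
    (hφ : ∀ (t s : ℝ) (x : F),
      φ t ((s : UnitAddCircle), x) = (((s + t : ℝ) : UnitAddCircle), g (t + s) (ginv s x)))
    (hadd : ∀ (t : ℝ) (n : ℕ), g (t + n) = g t * g 1 ^ n) (hgl : ∀ s x, ginv s (g s x) = x)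
    (hgr : ∀ s x, g s (ginv s x) = x) (hginv : Continuous ginv) {E : Set F} {s : ℝ} {x : F}
    (hx : discreteOmegaLimit (g 1) x ⊆ E) :
    flowOmegaLimit φ ((s : UnitAddCircle), g s x) ⊆ twistedProduct g E := by
  rintro ⟨q, y⟩ ⟨u, hu, hq⟩
  obtain ⟨σ, rfl⟩ := QuotientAddGroup.mk_surjective q
  simp only [hφ, hgl] at hq
  obtain ⟨n, hn, hδ⟩ := UnitAddCircle.exists_nat_tendsto_sub_of_tendsto_coe
    (tendsto_atTop_add_const_left _ s hu) ((continuous_fst.tendsto _).comp hq)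
  have hpow : ∀ k, (g 1 ^ n k) x = ginv (s + u k - n k) (g (u k + s) x) := fun k => by
    rw [show u k + s = (s + u k - n k) + n k by ring, hadd]
    exact (hgl _ _).symm
  have hconv : Tendsto (fun k => (g 1 ^ n k) x) atTop (𝓝 (ginv σ y)) := by
    simp only [hpow]
    exact (isBoundedBilinearMap_apply.continuous.tendsto (ginv σ, y)).comp
      (((hginv.tendsto σ).comp hδ).prodMk_nhds ((continuous_snd.tendsto _).comp hq))
  exact mem_twistedProduct.2 ⟨σ, ginv σ y, hx ⟨n, hn, hconv⟩, by rw [hgr]⟩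

end SkewProduct

/-- If `M` is a chain transitive component of the discrete flow of `g = g 1`, then the
stable set of `S¹ ×_g M` under the skew-product flow equals `S¹ ×_g st(M)`. -/
theorem stable_set_skew_product
    {F : Type*} [NormedAddCommGroup F] [NormedSpace ℝ F] [CompleteSpace F]
    (X g ginv : ℝ → F →L[ℝ] F)
    (hX : Continuous X) (hXper : ∀ t, X (t + 1) = X t)
    (hg0 : g 0 = 1) (hg : ∀ t, HasDerivAt g (X t ∘L g t) t)
    (hinv : ∀ s, g s ∘L ginv s = 1 ∧ ginv s ∘L g s = 1)
    (φ : ℝ → UnitAddCircle × F → UnitAddCircle × F)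
    (hφ : ∀ (t s : ℝ) (x : F),
      φ t ((s : UnitAddCircle), x) = (((s + t : ℝ) : UnitAddCircle), g (t + s) (ginv s x)))
    (M : Set F)
    (hM : M ∈ ChainComponents (fun x y => ‖x - y‖) (fun (n : ℕ) (x : F) => (g 1 ^ n) x)
      (fun t => {n : ℕ | t < (n : ℝ)})) :
    {p : UnitAddCircle × F |
        {q | ∃ u : ℕ → ℝ, Tendsto u atTop atTop ∧
            Tendsto (fun k => φ (u k) p) atTop (nhds q)} ⊆
          ⋃ s : ℝ, (fun y => ((s : UnitAddCircle), y)) '' (g s '' M)} =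
      ⋃ s : ℝ, (fun y => ((s : UnitAddCircle), y)) ''
        (g s '' {x : F | {y | ∃ n : ℕ → ℕ, Tendsto n atTop atTop ∧
            Tendsto (fun k => (g 1 ^ n k) x) atTop (nhds y)} ⊆ M}) := by
  have hgl : ∀ s x, ginv s (g s x) = x := fun s => DFunLike.congr_fun (hinv s).2
  have hgr : ∀ s x, g s (ginv s x) = x := fun s => DFunLike.congr_fun (hinv s).1
  have hadd := apply_add_nat_eq_mul_pow (fundamental_solution_add_one hX hXper hg0 hg)
  have hginv : Continuous ginv :=
    (continuous_iff_continuousAt.2 fun t => (hg t).continuousAt).inverse_of_mul_eq_one hinv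
  change {p | flowOmegaLimit φ p ⊆ twistedProduct g M} =
    twistedProduct g {x | discreteOmegaLimit (g 1) x ⊆ M}
  refine Subset.antisymm (fun ⟨q, y⟩ hp => ?_) (fun p hp => ?_)
  · obtain ⟨s, rfl⟩ := QuotientAddGroup.mk_surjective q
    rw [← hgr s y] at hp ⊢
    exact mem_twistedProduct.2
      ⟨s, _, discreteOmegaLimit_subset_of_flowOmegaLimit_subset hφ hadd hgl hM hp, rfl⟩
  · obtain ⟨s, x, hx, rfl⟩ := mem_twistedProduct.1 hp
    exact flowOmegaLimit_subset_twistedProduct hφ hadd hgl hgr hginv hx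
end
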